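/- The (k+1)×(k+1) matrix over L with (i,j)-entry f_{j, 2i} (0 ≤ i, j ≤ k), where f_{i,j} are the coefficients of φ(x^i) = Σ_j f_{i,j}τ^j for a rank two Drinfeld module φ, is upper triangular with nonzero diagonal entries f_{i,2i} = Δ^{(q^{2i}-1)/(q²-1)}, hence invertible. Consequently, for any C ∈ F_q[x] of degree at most k, the even-indexed coefficients α_0, α_2, ..., α_{2k} of φ(C) determine C uniquely by solving this triangular linear system. -/

import Mathlib

/-!
Left multiplication by `φ(x) = γ(x) + gτ + Δτ²` raises the `τ`-degree by exactly two and sends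
the leading coefficient `a` to `Δ a^(q²)`. Hence `φ(x)^j` has `τ`-degree `2j` with leading
coefficient `Δ^(1 + q² + ⋯ + q^(2(j-1)))`, so the matrix of even coefficients `f_{j,2i}` is upper
triangular with nonzero diagonal. Since `φ(C) = ∑ γ(c_j) φ(x)^j`, the even coefficients of `φ(C)`
are this matrix applied to the coefficient vector of `C`, which therefore determines `C`.
-/

/-- An abstract model of the skew polynomial ring `L⟨τ⟩` with the commutation rule
`τ u = u ^ q τ`: a ring `S` with a coefficient embedding `C : L →+* S`, a
distinguished element `tau`, and a coefficient function giving, for every element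
of `S`, its (unique, by `indep`) representation as `∑ C (u_i) * tau ^ i`. -/
structure SkewPolyRing (q : ℕ) (L : Type*) [Field L] (S : Type*) [Ring S] where
  C : L →+* S
  tau : S
  tau_comm : ∀ u : L, tau * C u = C (u ^ q) * tau
  coeff : S → (ℕ →₀ L)
  sum_coeff : ∀ U : S, ((coeff U).sum fun i a => C a * tau ^ i) = U
  indep : ∀ f : ℕ →₀ L, ((f.sum fun i a => C a * tau ^ i) = 0) → f = 0

namespace SkewPolyRing

variable {q : ℕ} {L S : Type*} [Field L] [Ring S]

/-- The degree of a skew polynomial (`⊥` for `0`). -/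
noncomputable def degree (P : SkewPolyRing q L S) (U : S) : WithBot ℕ :=
  (P.coeff U).support.max

end SkewPolyRing

theorem Matrix.isUnit_of_isUpperTriangular {n R : Type*} [Fintype n] [DecidableEq n]
    [LinearOrder n] [CommRing R] {M : Matrix n n R} (hM : M.IsUpperTriangular)
    (hdiag : ∀ i, IsUnit (M i i)) : IsUnit M := by
  rw [Matrix.isUnit_iff_isUnit_det, Matrix.det_of_isUpperTriangular hM]
  exact IsUnit.prod_univ_iff.mpr hdiag

namespace SkewPolyRing

variable {q : ℕ} {L S : Type*} [Field L] [Ring S] (P : SkewPolyRing q L S)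

theorem coeff_eq_of_sum_eq {f : ℕ →₀ L} {U : S}
    (h : (f.sum fun i a => P.C a * P.tau ^ i) = U) : P.coeff U = f := by
  refine sub_eq_zero.mp (P.indep _ ?_)
  rw [Finsupp.sum_sub_index (fun i a b => by rw [map_sub, sub_mul]), P.sum_coeff, h, sub_self]

theorem coeff_C_mul_tau_pow (a : L) (m : ℕ) :
    P.coeff (P.C a * P.tau ^ m) = Finsupp.single m a :=
  P.coeff_eq_of_sum_eq (Finsupp.sum_single_index (by simp))

theorem coeff_one : P.coeff 1 = Finsupp.single 0 1 := by
  simpa using P.coeff_C_mul_tau_pow 1 0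

def coeffAddMonoidHom : S →+ (ℕ →₀ L) where
  toFun := P.coeff
  map_zero' := P.coeff_eq_of_sum_eq Finsupp.sum_zero_index
  map_add' U V := P.coeff_eq_of_sum_eq (by
    rw [Finsupp.sum_add_index' (fun i => by simp) (fun i a b => by rw [map_add, add_mul]),
      P.sum_coeff, P.sum_coeff])

theorem coeff_zero : P.coeff 0 = 0 :=
  P.coeffAddMonoidHom.map_zero

theorem coeff_add (U V : S) : P.coeff (U + V) = P.coeff U + P.coeff V :=
  P.coeffAddMonoidHom.map_add U V

theorem coeff_sum {ι : Type*} (s : Finset ι) (U : ι → S) :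
    P.coeff (∑ i ∈ s, U i) = ∑ i ∈ s, P.coeff (U i) :=
  map_sum P.coeffAddMonoidHom U s

theorem coeff_C_mul (u : L) (U : S) : P.coeff (P.C u * U) = u • P.coeff U := by
  refine P.coeff_eq_of_sum_eq ?_
  rw [Finsupp.sum_smul_index (fun i => by simp)]
  conv_rhs => rw [← P.sum_coeff U, Finsupp.mul_sum]
  exact Finsupp.sum_congr fun i _ => by rw [map_mul, mul_assoc]

/-- For `q = 0` the commutation rule at `u = 0` would force `tau = 0`. -/
theorem q_ne_zero (P : SkewPolyRing q L S) : q ≠ 0 := by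
  rintro rfl
  have htau : P.tau = 0 := by simpa using (P.tau_comm 0).symm
  have := P.coeff_C_mul_tau_pow 1 1
  rw [htau, pow_one, mul_zero, coeff_zero] at this
  exact one_ne_zero (Finsupp.single_eq_zero.mp this.symm)

theorem tau_pow_mul_C (m : ℕ) (u : L) : P.tau ^ m * P.C u = P.C (u ^ q ^ m) * P.tau ^ m := by
  induction m generalizing u with
  | zero => simp
  | succ m ih =>
    rw [pow_succ, mul_assoc, P.tau_comm, ← mul_assoc, ih, mul_assoc, ← pow_succ, ← pow_mul,
      ← pow_succ']

theorem coeff_C_mul_tau_pow_mul (a : L) (m : ℕ) (U : S) :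
    P.coeff (P.C a * P.tau ^ m * U) =
      ((P.coeff U).mapRange (fun b => a * b ^ q ^ m)
        (by simp [P.q_ne_zero])).mapDomain (· + m) := by
  refine P.coeff_eq_of_sum_eq ?_
  rw [Finsupp.sum_mapDomain_index (fun i => by simp) (fun i a b => by rw [map_add, add_mul]),
    Finsupp.sum_mapRange_index (fun i => by simp)]
  conv_rhs => rw [← P.sum_coeff U, Finsupp.mul_sum]
  refine Finsupp.sum_congr fun i _ => ?_
  rw [mul_assoc, ← mul_assoc (P.tau ^ m), tau_pow_mul_C, map_mul, add_comm, pow_add]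
  simp only [mul_assoc]

theorem coeff_C_mul_tau_pow_mul_add (a : L) (m : ℕ) (U : S) (n : ℕ) :
    P.coeff (P.C a * P.tau ^ m * U) (n + m) = a * P.coeff U n ^ q ^ m := by
  rw [coeff_C_mul_tau_pow_mul, Finsupp.mapDomain_apply (add_left_injective m),
    Finsupp.mapRange_apply]

def evenCoeffMatrix (U : S) (k : ℕ) : Matrix (Fin (k + 1)) (Fin (k + 1)) L :=
  Matrix.of fun i j => P.coeff (U ^ (j : ℕ)) (2 * (i : ℕ))

theorem evenCoeffMatrix_apply (U : S) (k : ℕ) (i j : Fin (k + 1)) :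
    P.evenCoeffMatrix U k i j = P.coeff (U ^ (j : ℕ)) (2 * (i : ℕ)) :=
  rfl

section Quadratic

variable {c g Δ : L}

theorem coeff_quadratic_mul_add_two (U : S) (n : ℕ) :
    P.coeff ((P.C c + P.C g * P.tau + P.C Δ * P.tau ^ 2) * U) (n + 2) =
      c * P.coeff U (n + 2) + g * P.coeff U (n + 1) ^ q + Δ * P.coeff U n ^ q ^ 2 := by
  have hg : P.coeff (P.C g * P.tau * U) (n + 2) = g * P.coeff U (n + 1) ^ q := by
    simpa using P.coeff_C_mul_tau_pow_mul_add g 1 U (n + 1)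
  rw [add_mul, add_mul, coeff_add, coeff_add, Finsupp.add_apply, Finsupp.add_apply, coeff_C_mul,
    Finsupp.smul_apply, smul_eq_mul, hg, coeff_C_mul_tau_pow_mul_add]

theorem coeff_quadratic_pow_of_lt {j n : ℕ} (hn : 2 * j < n) :
    P.coeff ((P.C c + P.C g * P.tau + P.C Δ * P.tau ^ 2) ^ j) n = 0 := by
  induction j generalizing n with
  | zero => simpa [coeff_one, Finsupp.single_apply] using hn.ne
  | succ j ih =>
    obtain ⟨n, rfl⟩ : ∃ m, n = m + 2 := ⟨n - 2, by omega⟩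
    rw [pow_succ', coeff_quadratic_mul_add_two, ih (by omega), ih (by omega), ih (by omega),
      zero_pow P.q_ne_zero, zero_pow (pow_ne_zero 2 P.q_ne_zero)]
    simp

theorem coeff_quadratic_pow_two_mul (j : ℕ) :
    P.coeff ((P.C c + P.C g * P.tau + P.C Δ * P.tau ^ 2) ^ j) (2 * j) =
      Δ ^ ∑ m ∈ Finset.range j, (q ^ 2) ^ m := by
  induction j with
  | zero => simp [coeff_one]
  | succ j ih =>
    rw [pow_succ', Nat.mul_succ, coeff_quadratic_mul_add_two,
      P.coeff_quadratic_pow_of_lt (j := j) (n := 2 * j + 2) (by omega),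
      P.coeff_quadratic_pow_of_lt (j := j) (n := 2 * j + 1) (by omega), ih, geom_sum_succ,
      zero_pow P.q_ne_zero]
    ring

theorem isUpperTriangular_evenCoeffMatrix_quadratic (k : ℕ) :
    (P.evenCoeffMatrix (P.C c + P.C g * P.tau + P.C Δ * P.tau ^ 2) k).IsUpperTriangular :=
  fun _ _ hji => P.coeff_quadratic_pow_of_lt (by simp only [id] at hji; omega)

theorem evenCoeffMatrix_quadratic_apply_self (k : ℕ) (i : Fin (k + 1)) :
    P.evenCoeffMatrix (P.C c + P.C g * P.tau + P.C Δ * P.tau ^ 2) k i i =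
      Δ ^ ∑ m ∈ Finset.range i, (q ^ 2) ^ m :=
  P.coeff_quadratic_pow_two_mul i

theorem isUnit_evenCoeffMatrix_quadratic (hΔ : Δ ≠ 0) (k : ℕ) :
    IsUnit (P.evenCoeffMatrix (P.C c + P.C g * P.tau + P.C Δ * P.tau ^ 2) k) :=
  Matrix.isUnit_of_isUpperTriangular (P.isUpperTriangular_evenCoeffMatrix_quadratic k) fun i => by
    rw [evenCoeffMatrix_quadratic_apply_self]
    exact (pow_ne_zero _ hΔ).isUnit

end Quadratic

section PolynomialImage

open Polynomial

theorem evenCoeffMatrix_mulVec {R : Type*} [CommSemiring R] [Algebra R L] {φ : R[X] →+* S}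
    (hφ : ∀ a, φ (Polynomial.C a) = P.C (algebraMap R L a)) {k : ℕ} {p : R[X]}
    (hp : p.natDegree ≤ k) :
    (P.evenCoeffMatrix (φ X) k).mulVec (fun j : Fin (k + 1) => algebraMap R L (p.coeff j)) =
      fun i : Fin (k + 1) => P.coeff (φ p) (2 * (i : ℕ)) := by
  have hφp : φ p = ∑ j : Fin (k + 1), P.C (algebraMap R L (p.coeff j)) * φ X ^ (j : ℕ) := by
    rw [Fin.sum_univ_eq_sum_range (fun j => P.C (algebraMap R L (p.coeff j)) * φ X ^ j)]
    conv_lhs => rw [p.as_sum_range' (k + 1) (by omega), map_sum]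
    simp only [← C_mul_X_pow_eq_monomial, map_mul, map_pow, hφ]
  ext i
  simp only [hφp, coeff_sum, Finsupp.finsetSum_apply, coeff_C_mul, Finsupp.smul_apply,
    smul_eq_mul, Matrix.mulVec, dotProduct, evenCoeffMatrix_apply, mul_comm]

theorem eq_of_coeff_two_mul_eq {R : Type*} [Field R] [Algebra R L] {φ : R[X] →+* S}
    (hφ : ∀ a, φ (Polynomial.C a) = P.C (algebraMap R L a)) {k : ℕ}
    (hk : IsUnit (P.evenCoeffMatrix (φ X) k)) {p r : R[X]} (hp : p.natDegree ≤ k)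
    (hr : r.natDegree ≤ k)
    (h : ∀ i ≤ k, P.coeff (φ p) (2 * i) = P.coeff (φ r) (2 * i)) : p = r := by
  have hcoeff : (fun j : Fin (k + 1) => algebraMap R L (p.coeff j)) =
      fun j : Fin (k + 1) => algebraMap R L (r.coeff j) := by
    refine Matrix.mulVec_injective_iff_isUnit.mpr hk ?_
    rw [P.evenCoeffMatrix_mulVec hφ hp, P.evenCoeffMatrix_mulVec hφ hr]
    exact funext fun i => h i (Nat.lt_succ_iff.mp i.isLt)
  ext n
  by_cases hn : n ≤ k
  · exact (algebraMap R L).injective (congrFun hcoeff ⟨n, Nat.lt_succ_of_le hn⟩)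
  · rw [coeff_eq_zero_of_natDegree_lt (by omega), coeff_eq_zero_of_natDegree_lt (by omega)]

end PolynomialImage

end SkewPolyRing

theorem triangular_coefficient_matrix_invertible_general
    (q : ℕ) (Fq L S : Type*) [Field Fq] [Fintype Fq] [Field L]
    [Algebra Fq L] [Ring S]
    (hq : q = Fintype.card Fq)
    (P : SkewPolyRing q L S)
    (c g Δ : L) (hΔ : Δ ≠ 0)
    (φ : Polynomial Fq →+* S)
    (hconst : ∀ a : Fq, φ (Polynomial.C a) = P.C (algebraMap Fq L a))
    (hX : φ Polynomial.X = P.C c + P.C g * P.tau + P.C Δ * P.tau ^ 2)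
    (k : ℕ)
    (M : Matrix (Fin (k + 1)) (Fin (k + 1)) L)
    (hM : ∀ i j : Fin (k + 1),
      M i j = P.coeff (φ Polynomial.X ^ (j : ℕ)) (2 * (i : ℕ))) :
    (∀ i j : Fin (k + 1), (j : ℕ) < (i : ℕ) → M i j = 0) ∧
    (∀ i : Fin (k + 1),
      M i i = Δ ^ ((q ^ (2 * (i : ℕ)) - 1) / (q ^ 2 - 1)) ∧ M i i ≠ 0) ∧
    IsUnit M ∧
    (∀ C D : Polynomial Fq, C.natDegree ≤ k → D.natDegree ≤ k →
      (∀ i : ℕ, i ≤ k → P.coeff (φ C) (2 * i) = P.coeff (φ D) (2 * i)) →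
      C = D) := by
  have hq2 : 2 ≤ q ^ 2 := hq ▸ Nat.one_lt_pow two_ne_zero Fintype.one_lt_card
  have hMX : M = P.evenCoeffMatrix (φ Polynomial.X) k := Matrix.ext hM
  have hMφ : M = P.evenCoeffMatrix (P.C c + P.C g * P.tau + P.C Δ * P.tau ^ 2) k := hX ▸ hMX
  have hdiag (i : Fin (k + 1)) : M i i = Δ ^ ((q ^ (2 * (i : ℕ)) - 1) / (q ^ 2 - 1)) := by
    rw [hMφ, SkewPolyRing.evenCoeffMatrix_quadratic_apply_self, Nat.geomSum_eq hq2, pow_mul]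
  have hunit : IsUnit M := hMφ ▸ P.isUnit_evenCoeffMatrix_quadratic hΔ k
  refine ⟨fun i j hji => hMφ ▸ P.isUpperTriangular_evenCoeffMatrix_quadratic k hji,
    fun i => ⟨hdiag i, hdiag i ▸ pow_ne_zero _ hΔ⟩, hunit, fun C D hC hD hCD => ?_⟩
  exact P.eq_of_coeff_two_mul_eq hconst (hMX ▸ hunit) hC hD hCD

/-- the `(k+1)×(k+1)` matrix with `(i,j)` entry `f_{j,2i}` (where
`φ(x)^i = ∑_j f_{i,j} τ^j`) is upper triangular with nonzero diagonal entries
`f_{i,2i} = Δ^((q^{2i}-1)/(q²-1))`, hence invertible; consequently any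
`C ∈ F_q[x]` of degree at most `k` is uniquely determined by the even-indexed
coefficients of `φ(C)`. -/
theorem triangular_coefficient_matrix_invertible
    (p q : ℕ) (Fq L S : Type*) [Field Fq] [Fintype Fq] [Field L] [Fintype L]
    [Algebra Fq L] [Ring S] (hp : p.Prime) [CharP L p]
    (hq : q = Fintype.card Fq)
    (P : SkewPolyRing q L S)
    (c g Δ : L) (hΔ : Δ ≠ 0)
    (φ : Polynomial Fq →+* S)
    (hconst : ∀ a : Fq, φ (Polynomial.C a) = P.C (algebraMap Fq L a))
    (hX : φ Polynomial.X = P.C c + P.C g * P.tau + P.C Δ * P.tau ^ 2)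
    (k : ℕ)
    (M : Matrix (Fin (k + 1)) (Fin (k + 1)) L)
    (hM : ∀ i j : Fin (k + 1),
      M i j = P.coeff (φ Polynomial.X ^ (j : ℕ)) (2 * (i : ℕ))) :
    (∀ i j : Fin (k + 1), (j : ℕ) < (i : ℕ) → M i j = 0) ∧
    (∀ i : Fin (k + 1),
      M i i = Δ ^ ((q ^ (2 * (i : ℕ)) - 1) / (q ^ 2 - 1)) ∧ M i i ≠ 0) ∧
    IsUnit M ∧
    (∀ C D : Polynomial Fq, C.natDegree ≤ k → D.natDegree ≤ k →
      (∀ i : ℕ, i ≤ k → P.coeff (φ C) (2 * i) = P.coeff (φ D) (2 * i)) →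
      C = D) :=
  triangular_coefficient_matrix_invertible_general q Fq L S hq P c g Δ hΔ φ hconst hX k M hM
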